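/- Let p and q be probability distributions on {1,...,M_x} × {1,...,M_y} with 2 ≤ M_x ≤ M_y. Fix ε > 0 and suppose V(p,q) ≤ ε, where V denotes variational distance. Then: (i) if ε ≤ 2 − 2/M_x, then |I(p) − I(q)| ≤ (ε/2)·log[(M_x·M_y − 1)(M_x − 1)(M_y − 1)] + 3·ℋ(ε/2); and (ii) if ε > 2 − 2/M_x, then |I(p) − I(q)| ≤ log M_x. Here I denotes mutual information, ℋ the binary entropy function, and all logarithms are natural. -/

import Mathlib

open scoped BigOperators

/-- `p` is a probability distribution on the finite type `α`. -/
def IsDist {α : Type*} [Fintype α] (p : α → ℝ) : Prop :=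
  (∀ a, 0 ≤ p a) ∧ ∑ a, p a = 1

/-- Shannon entropy (natural logarithm, with `0 · log 0 = 0`). -/
noncomputable def entropy {α : Type*} [Fintype α] (p : α → ℝ) : ℝ :=
  -∑ a, p a * Real.log (p a)

/-- Variational distance between two distributions on the same finite set. -/
noncomputable def Vdist {α : Type*} [Fintype α] (p q : α → ℝ) : ℝ :=
  ∑ a, |p a - q a|

/-- First marginal of a joint distribution. -/
noncomputable def margX {Mx My : ℕ} (p : Fin Mx × Fin My → ℝ) : Fin Mx → ℝ :=
  fun i => ∑ j, p (i, j)

/-- Second marginal of a joint distribution. -/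
noncomputable def margY {Mx My : ℕ} (p : Fin Mx × Fin My → ℝ) : Fin My → ℝ :=
  fun j => ∑ i, p (i, j)

/-- Mutual information of a joint distribution. -/
noncomputable def mutInfo {Mx My : ℕ} (p : Fin Mx × Fin My → ℝ) : ℝ :=
  entropy (margX p) + entropy (margY p) - entropy p

/-- Binary entropy function. -/
noncomputable def binEnt (x : ℝ) : ℝ :=
  -x * Real.log x - (1 - x) * Real.log (1 - x)

/-!
Write `I = H(X) + H(Y) - H(X,Y)` and bound each of the three entropy differences by the continuity
bound `|H(p) - H(q)| ≤ t log (N - 1) + ℋ(t)` on `N` points, where `t = V(p,q)/2`; marginalising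
does not increase `V`, and the right side is increasing in `t` on `[0, 1 - 1/N]`, so `t` may be
replaced by `ε/2`. The continuity bound comes from the overlap decomposition `p = m + u`,
`q = m + v` with `m = min p q`, `∑ u = ∑ v = t`: concavity of `x ↦ -x log x` gives
`H(p) ≥ H(m) + H(u) - (1 - t) log (1 - t) - t log t`, subadditivity gives `H(q) ≤ H(m) + H(v)`,
and `v` vanishes wherever `u` does not, so it lives on at most `N - 1` points and
`H(v) ≤ t log (N - 1) - t log t ≤ t log (N - 1) + H(u)`.
For `ε > 2 - 2/M_x` it suffices that `0 ≤ I ≤ log M_x`.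
-/

open Finset Real

lemma mul_log_le_mul_log_of_le {x y : ℝ} (hx : 0 ≤ x) (hxy : x ≤ y) :
    x * log x ≤ x * log y := by
  rcases hx.eq_or_lt with rfl | hx
  · simp
  · exact mul_le_mul_of_nonneg_left (log_le_log hx hxy) hx.le

lemma negMulLog_add_le {x y : ℝ} (hx : 0 ≤ x) (hy : 0 ≤ y) :
    negMulLog (x + y) ≤ negMulLog x + negMulLog y := by
  have := mul_log_le_mul_log_of_le hx (le_add_of_nonneg_right hy)
  have := mul_log_le_mul_log_of_le hy (le_add_of_nonneg_left hx)
  simp only [negMulLog, neg_mul]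
  linarith [add_mul x y (log (x + y))]

lemma negMulLog_sum_le {ι : Type*} (s : Finset ι) {v : ι → ℝ} (hv : ∀ i, 0 ≤ v i) :
    negMulLog (∑ i ∈ s, v i) ≤ ∑ i ∈ s, negMulLog (v i) :=
  le_sum_of_subadditive_on_pred negMulLog (0 ≤ ·) negMulLog_zero.le
    (fun _ _ hx hy => negMulLog_add_le hx hy) (fun _ _ => add_nonneg) v fun i _ => hv i

lemma mul_negMulLog_div {s : ℝ} (hs : 0 < s) (x : ℝ) :
    s * negMulLog (x / s) = negMulLog x + x * log s := by
  rcases eq_or_ne x 0 with rfl | hx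
  · simp
  · rw [negMulLog, negMulLog, log_div hx hs.ne']
    field_simp
    ring

lemma negMulLog_add_negMulLog_le {s w m u : ℝ} (hs : 0 < s) (hw : 0 < w) (hsw : s + w = 1)
    (hm : 0 ≤ m) (hu : 0 ≤ u) :
    negMulLog m + negMulLog u ≤ negMulLog (m + u) - m * log s - u * log w := by
  have h := concaveOn_negMulLog.2 (Set.mem_Ici.2 (div_nonneg hm hs.le))
    (Set.mem_Ici.2 (div_nonneg hu hw.le)) hs.le hw.le hsw
  simp only [smul_eq_mul, mul_div_cancel₀ _ hs.ne', mul_div_cancel₀ _ hw.ne',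
    mul_negMulLog_div hs, mul_negMulLog_div hw] at h
  linarith

section Entropy

variable {α : Type*} [Fintype α]

lemma entropy_eq_sum_negMulLog (p : α → ℝ) : entropy p = ∑ a, negMulLog (p a) := by
  simp [entropy, negMulLog]

lemma Vdist_comm (p q : α → ℝ) : Vdist p q = Vdist q p := by
  simp [Vdist, abs_sub_comm]

lemma Vdist_nonneg (p q : α → ℝ) : 0 ≤ Vdist p q :=
  sum_nonneg fun _ _ => abs_nonneg _

lemma sum_negMulLog_le {v : α → ℝ} (hv : ∀ a, 0 ≤ v a) {K : ℝ}
    (hK : (#{a | v a ≠ 0} : ℝ) ≤ K) :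
    ∑ a, negMulLog (v a) ≤ (∑ a, v a) * log K + negMulLog (∑ a, v a) := by
  set S : Finset α := {a | v a ≠ 0}
  have hvS : ∑ a ∈ S, v a = ∑ a, v a := sum_filter_of_ne fun _ _ h => h
  have hnegS : ∑ a ∈ S, negMulLog (v a) = ∑ a, negMulLog (v a) :=
    sum_filter_of_ne fun a _ h ha => h (by simp [ha])
  rcases S.eq_empty_or_nonempty with hS | hS
  · simp [← hvS, ← hnegS, hS]
  have hc : (0 : ℝ) < #S := by exact_mod_cast hS.card_pos
  have jensen := concaveOn_negMulLog.le_map_sum (t := S) (w := fun _ => (#S : ℝ)⁻¹) (p := v)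
    (fun _ _ => by positivity) (by simp [hc.ne']) fun a _ => Set.mem_Ici.2 (hv a)
  simp only [smul_eq_mul, inv_mul_eq_div, ← sum_div, hvS, hnegS] at jensen
  have hlog : (∑ a, v a) * log #S ≤ (∑ a, v a) * log K :=
    mul_le_mul_of_nonneg_left (log_le_log hc hK) (sum_nonneg fun a _ => hv a)
  have := mul_negMulLog_div hc (∑ a, v a)
  rw [div_le_iff₀ hc] at jensen
  linarith

lemma sum_sub_min_eq_half_Vdist {p q : α → ℝ} (hp : IsDist p) (hq : IsDist q) :
    ∑ a, (p a - min (p a) (q a)) = Vdist p q / 2 := by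
  have h : ∀ a, p a - min (p a) (q a) = (|p a - q a| + (p a - q a)) / 2 := by
    intro a
    rcases le_total (p a) (q a) with h | h
    · rw [min_eq_left h, abs_of_nonpos (sub_nonpos.2 h)]; ring
    · rw [min_eq_right h, abs_of_nonneg (sub_nonneg.2 h)]; ring
  simp only [h, ← sum_div, sum_add_distrib, sum_sub_distrib, hp.2, hq.2, Vdist]
  ring

lemma sum_negMulLog_add_sub_le {m u v : α → ℝ} (hm : ∀ a, 0 ≤ m a) (hu : ∀ a, 0 ≤ u a)
    (hv : ∀ a, 0 ≤ v a) {t K : ℝ} (ht₀ : 0 < t) (ht₁ : t < 1) (hmt : ∑ a, m a = 1 - t)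
    (hut : ∑ a, u a = t) (hvt : ∑ a, v a = t) (hK : (#{a | v a ≠ 0} : ℝ) ≤ K) :
    ∑ a, negMulLog (m a + v a) - ∑ a, negMulLog (m a + u a) ≤ t * log K + binEntropy t := by
  have upper :
      ∑ a, negMulLog (m a + v a) ≤ ∑ a, negMulLog (m a) + (t * log K + negMulLog t) :=
    calc ∑ a, negMulLog (m a + v a) ≤ ∑ a, (negMulLog (m a) + negMulLog (v a)) :=
          sum_le_sum fun a _ => negMulLog_add_le (hm a) (hv a)
      _ ≤ _ := by
          rw [sum_add_distrib]
          gcongr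
          simpa [hvt] using sum_negMulLog_le hv hK
  have lower : ∑ a, negMulLog (m a) + ∑ a, negMulLog (u a) ≤
      ∑ a, negMulLog (m a + u a) - (1 - t) * log (1 - t) - t * log t :=
    calc _ = ∑ a, (negMulLog (m a) + negMulLog (u a)) := sum_add_distrib.symm
      _ ≤ ∑ a, (negMulLog (m a + u a) - m a * log (1 - t) - u a * log t) :=
          sum_le_sum fun a _ =>
            negMulLog_add_negMulLog_le (sub_pos.2 ht₁) ht₀ (by ring) (hm a) (hu a)
      _ = _ := by simp only [sum_sub_distrib, ← sum_mul, hmt, hut]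
  have spread : negMulLog t ≤ ∑ a, negMulLog (u a) := hut ▸ negMulLog_sum_le univ hu
  have h₁ : negMulLog t = -(t * log t) := neg_mul _ _
  have h₂ : negMulLog (1 - t) = -((1 - t) * log (1 - t)) := neg_mul _ _
  rw [binEntropy_eq_negMulLog_add_negMulLog_one_sub]
  linarith

lemma qaryEntropy_eq (N : ℕ) (x : ℝ) :
    qaryEntropy N x = x * log ((N : ℝ) - 1) + binEntropy x := by
  simp [qaryEntropy]

lemma entropy_sub_le_qaryEntropy {p q : α → ℝ} (hp : IsDist p) (hq : IsDist q)
    (hN : 2 ≤ Fintype.card α) (hV : Vdist p q / 2 ≤ 1 - 1 / Fintype.card α) :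
    entropy q - entropy p ≤ qaryEntropy (Fintype.card α) (Vdist p q / 2) := by
  set N := Fintype.card α
  set t := Vdist p q / 2
  set m : α → ℝ := fun a => min (p a) (q a)
  set u : α → ℝ := fun a => p a - m a
  set v : α → ℝ := fun a => q a - m a
  have hut : ∑ a, u a = t := sum_sub_min_eq_half_Vdist hp hq
  have hvt : ∑ a, v a = t := by
    simp only [v, m, min_comm (p _), t, Vdist_comm p q]
    exact sum_sub_min_eq_half_Vdist hq hp
  rcases (show 0 ≤ t from div_nonneg (Vdist_nonneg p q) zero_le_two).eq_or_lt with ht | ht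
  · have hV₀ : Vdist p q = 0 := by simp only [t] at ht; linarith
    have hpq : p = q := funext fun a => sub_eq_zero.1 <| abs_eq_zero.1 <|
      (sum_eq_zero_iff_of_nonneg fun a _ => abs_nonneg _).1 hV₀ a (mem_univ a)
    rw [← ht, hpq, sub_self, qaryEntropy_zero]
  have ht₁ : t < 1 := hV.trans_lt (sub_lt_self 1 (by simp only [N]; positivity))
  have hmt : ∑ a, m a = 1 - t := by
    rw [← hp.2, ← hut, ← sum_sub_distrib]
    simp [u]
  have hsupp : (#{a | v a ≠ 0} : ℝ) ≤ N - 1 := by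
    obtain ⟨a₀, -, ha₀⟩ := exists_ne_zero_of_sum_ne_zero (hut.trans_ne ht.ne')
    have hv₀ : v a₀ = 0 := by
      rcases le_total (p a₀) (q a₀) with h | h
      · simp [u, m, min_eq_left h] at ha₀
      · simp [v, m, min_eq_right h]
    have : #{a | v a ≠ 0} < N :=
      card_lt_card (filter_ssubset.2 ⟨a₀, mem_univ _, not_not.2 hv₀⟩)
    rw [le_sub_iff_add_le]
    exact_mod_cast this
  have key := sum_negMulLog_add_sub_le (fun a => le_min (hp.1 a) (hq.1 a))
    (fun a => sub_nonneg.2 (min_le_left _ _)) (fun a => sub_nonneg.2 (min_le_right _ _))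
    ht ht₁ hmt hut hvt hsupp
  simp only [add_sub_cancel] at key
  rwa [entropy_eq_sum_negMulLog, entropy_eq_sum_negMulLog, qaryEntropy_eq]

lemma abs_entropy_sub_le_qaryEntropy {p q : α → ℝ} (hp : IsDist p) (hq : IsDist q) {N : ℕ}
    (hcard : Fintype.card α = N) (hN : 2 ≤ N) {e : ℝ} (hV : Vdist p q ≤ 2 * e)
    (he : e ≤ 1 - 1 / N) :
    |entropy p - entropy q| ≤ qaryEntropy N e := by
  subst hcard
  have one_sided : ∀ {p q : α → ℝ}, IsDist p → IsDist q → Vdist p q ≤ 2 * e →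
      entropy q - entropy p ≤ qaryEntropy (Fintype.card α) e := fun {p q} hp hq hV =>
    (entropy_sub_le_qaryEntropy hp hq hN (by linarith)).trans <|
      (qaryEntropy_strictMonoOn hN).monotoneOn
        ⟨div_nonneg (Vdist_nonneg p q) zero_le_two, by linarith⟩
        ⟨by linarith [Vdist_nonneg p q], he⟩ (by linarith)
  exact abs_sub_le_iff.2 ⟨one_sided hq hp (Vdist_comm p q ▸ hV), one_sided hp hq hV⟩

lemma sum_mul_log_le_sum_mul_log {p r : α → ℝ} (hp : ∀ a, 0 ≤ p a) (hr : ∀ a, 0 ≤ r a)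
    (hpr : ∀ a, p a ≠ 0 → r a ≠ 0) (hsum : ∑ a, r a ≤ ∑ a, p a) :
    ∑ a, p a * log (r a) ≤ ∑ a, p a * log (p a) := by
  have pointwise : ∀ a, p a * log (r a) - p a * log (p a) ≤ r a - p a := by
    intro a
    rcases (hp a).eq_or_lt with h | h
    · simp [← h, hr a]
    · have hra : 0 < r a := (hr a).lt_of_ne' (hpr a h.ne')
      have := mul_le_mul_of_nonneg_left (log_le_sub_one_of_pos (div_pos hra h)) h.le
      rw [log_div hra.ne' h.ne', mul_sub_one, mul_div_cancel₀ _ h.ne'] at this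
      linarith
  have := sum_le_sum fun a (_ : a ∈ univ) => pointwise a
  rw [sum_sub_distrib, sum_sub_distrib] at this
  linarith

lemma entropy_le_log_card {p : α → ℝ} (hp : IsDist p) :
    entropy p ≤ log (Fintype.card α) := by
  have := sum_negMulLog_le hp.1 (K := Fintype.card α) (by exact_mod_cast card_le_univ _)
  simpa [entropy_eq_sum_negMulLog, hp.2] using this

end Entropy

lemma binEnt_eq_binEntropy (x : ℝ) : binEnt x = binEntropy x := by
  simp only [binEnt, binEntropy_eq_negMulLog_add_negMulLog_one_sub, negMulLog]
  ring

section Marginals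

variable {Mx My : ℕ}

lemma margX_isDist {p : Fin Mx × Fin My → ℝ} (hp : IsDist p) : IsDist (margX p) :=
  ⟨fun _ => sum_nonneg fun _ _ => hp.1 _, by rw [← hp.2, Fintype.sum_prod_type]; rfl⟩

lemma margY_isDist {p : Fin Mx × Fin My → ℝ} (hp : IsDist p) : IsDist (margY p) :=
  ⟨fun _ => sum_nonneg fun _ _ => hp.1 _, by rw [← hp.2, Fintype.sum_prod_type_right]; rfl⟩

lemma le_margX {p : Fin Mx × Fin My → ℝ} (hp : ∀ a, 0 ≤ p a) (i : Fin Mx) (j : Fin My) :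
    p (i, j) ≤ margX p i :=
  single_le_sum (fun j _ => hp (i, j)) (mem_univ j)

lemma le_margY {p : Fin Mx × Fin My → ℝ} (hp : ∀ a, 0 ≤ p a) (i : Fin Mx) (j : Fin My) :
    p (i, j) ≤ margY p j :=
  single_le_sum (fun i _ => hp (i, j)) (mem_univ i)

lemma Vdist_margX_le (p q : Fin Mx × Fin My → ℝ) :
    Vdist (margX p) (margX q) ≤ Vdist p q := by
  rw [Vdist, Vdist, Fintype.sum_prod_type]
  gcongr with i
  simpa only [margX, ← sum_sub_distrib] using abs_sum_le_sum_abs _ _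

lemma Vdist_margY_le (p q : Fin Mx × Fin My → ℝ) :
    Vdist (margY p) (margY q) ≤ Vdist p q := by
  rw [Vdist, Vdist, Fintype.sum_prod_type_right]
  gcongr with j
  simpa only [margY, ← sum_sub_distrib] using abs_sum_le_sum_abs _ _

lemma entropy_margX_eq (p : Fin Mx × Fin My → ℝ) :
    entropy (margX p) = -∑ ab, p ab * log (margX p ab.1) := by
  rw [entropy, Fintype.sum_prod_type]
  simp only [← sum_mul]
  rfl

lemma entropy_margY_eq (p : Fin Mx × Fin My → ℝ) :
    entropy (margY p) = -∑ ab, p ab * log (margY p ab.2) := by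
  rw [entropy, Fintype.sum_prod_type_right]
  simp only [← sum_mul]
  rfl

lemma entropy_margY_le {p : Fin Mx × Fin My → ℝ} (hp : ∀ a, 0 ≤ p a) :
    entropy (margY p) ≤ entropy p := by
  rw [entropy_margY_eq, entropy, neg_le_neg_iff]
  exact sum_le_sum fun ab _ => mul_log_le_mul_log_of_le (hp ab) (le_margY hp ab.1 ab.2)

lemma mutInfo_nonneg {p : Fin Mx × Fin My → ℝ} (hp : IsDist p) : 0 ≤ mutInfo p := by
  have margX_ne : ∀ ab, p ab ≠ 0 → margX p ab.1 ≠ 0 := fun ab h =>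
    ((hp.1 ab).lt_of_ne' h |>.trans_le (le_margX hp.1 ab.1 ab.2)).ne'
  have margY_ne : ∀ ab, p ab ≠ 0 → margY p ab.2 ≠ 0 := fun ab h =>
    ((hp.1 ab).lt_of_ne' h |>.trans_le (le_margY hp.1 ab.1 ab.2)).ne'
  have gibbs := sum_mul_log_le_sum_mul_log hp.1
    (r := fun ab => margX p ab.1 * margY p ab.2)
    (fun ab => mul_nonneg ((margX_isDist hp).1 _) ((margY_isDist hp).1 _))
    (fun ab h => mul_ne_zero (margX_ne ab h) (margY_ne ab h))
    (by rw [Fintype.sum_prod_type, ← sum_mul_sum, (margX_isDist hp).2, (margY_isDist hp).2,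
      hp.2, one_mul])
  have log_split : ∀ ab, p ab * log (margX p ab.1 * margY p ab.2) =
      p ab * log (margX p ab.1) + p ab * log (margY p ab.2) := by
    intro ab
    rcases eq_or_ne (p ab) 0 with h | h
    · simp [h]
    · rw [log_mul (margX_ne ab h) (margY_ne ab h), mul_add]
  simp only [log_split, sum_add_distrib] at gibbs
  rw [mutInfo, entropy_margX_eq, entropy_margY_eq, entropy]
  linarith

lemma mutInfo_le_log {p : Fin Mx × Fin My → ℝ} (hp : IsDist p) : mutInfo p ≤ log Mx := by
  have hX := entropy_le_log_card (margX_isDist hp)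
  rw [Fintype.card_fin] at hX
  have hY := entropy_margY_le hp.1
  rw [mutInfo]
  linarith

lemma abs_mutInfo_sub_le (p q : Fin Mx × Fin My → ℝ) :
    |mutInfo p - mutInfo q| ≤ |entropy (margX p) - entropy (margX q)| +
      |entropy (margY p) - entropy (margY q)| + |entropy p - entropy q| := by
  calc |mutInfo p - mutInfo q| = |(entropy (margX p) - entropy (margX q)) +
        (entropy (margY p) - entropy (margY q)) + (entropy q - entropy p)| := by
        rw [mutInfo, mutInfo]; ring_nf
    _ ≤ _ := by rw [abs_sub_comm (entropy p)]; exact abs_add_three _ _ _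

end Marginals

theorem mutInfo_diff_le_improved_general {Mx My : ℕ} (hMx : 2 ≤ Mx) (hMxy : Mx ≤ My)
    (p q : Fin Mx × Fin My → ℝ) (hp : IsDist p) (hq : IsDist q)
    (ε : ℝ) (hV : Vdist p q ≤ ε) :
    (ε ≤ 2 - 2 / (Mx : ℝ) →
      |mutInfo p - mutInfo q| ≤
        ε / 2 * Real.log (((Mx : ℝ) * My - 1) * ((Mx : ℝ) - 1) * ((My : ℝ) - 1)) +
          3 * binEnt (ε / 2)) ∧
    (2 - 2 / (Mx : ℝ) < ε → |mutInfo p - mutInfo q| ≤ Real.log (Mx : ℝ)) := by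
  refine ⟨fun hε => ?_, fun _ => abs_sub_le_of_nonneg_of_le (mutInfo_nonneg hp)
    (mutInfo_le_log hp) (mutInfo_nonneg hq) (mutInfo_le_log hq)⟩
  have hMxR : (2 : ℝ) ≤ Mx := by exact_mod_cast hMx
  have hMyR : (Mx : ℝ) ≤ My := by exact_mod_cast hMxy
  have hV₂ : Vdist p q ≤ 2 * (ε / 2) := by linarith
  have heX : ε / 2 ≤ 1 - 1 / (Mx : ℝ) := by linarith [mul_one_div (2 : ℝ) Mx]
  have hX := abs_entropy_sub_le_qaryEntropy (margX_isDist hp) (margX_isDist hq)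
    (Fintype.card_fin Mx) hMx ((Vdist_margX_le p q).trans hV₂) heX
  have hY := abs_entropy_sub_le_qaryEntropy (margY_isDist hp) (margY_isDist hq)
    (Fintype.card_fin My) (hMx.trans hMxy) ((Vdist_margY_le p q).trans hV₂)
    (heX.trans (by gcongr))
  have hXY := abs_entropy_sub_le_qaryEntropy (N := Mx * My) hp hq (by simp) (by nlinarith) hV₂
    (heX.trans (by push_cast; gcongr; nlinarith))
  have hA : (0 : ℝ) < Mx * My - 1 := by nlinarith
  have hB : (0 : ℝ) < Mx - 1 := by linarith
  have hC : (0 : ℝ) < My - 1 := by linarith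
  calc |mutInfo p - mutInfo q|
      ≤ qaryEntropy Mx (ε / 2) + qaryEntropy My (ε / 2) + qaryEntropy (Mx * My) (ε / 2) :=
        (abs_mutInfo_sub_le p q).trans (by gcongr)
    _ = _ := by
        rw [qaryEntropy_eq, qaryEntropy_eq, qaryEntropy_eq, binEnt_eq_binEntropy,
          log_mul (mul_pos hA hB).ne' hC.ne', log_mul hA.ne' hB.ne']
        push_cast
        ring

/-- Theorem 1: improved mutual-information difference bound.
If `V(p,q) ≤ ε` then `|I(p)-I(q)|` is bounded by
`(ε/2)·log[(Mx·My-1)(Mx-1)(My-1)] + 3·ℋ(ε/2)` when `ε ≤ 2 - 2/Mx`,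
and by `log Mx` when `ε > 2 - 2/Mx`. -/
theorem mutInfo_diff_le_improved {Mx My : ℕ} (hMx : 2 ≤ Mx) (hMxy : Mx ≤ My)
    (p q : Fin Mx × Fin My → ℝ) (hp : IsDist p) (hq : IsDist q)
    (ε : ℝ) (hε : 0 < ε) (hV : Vdist p q ≤ ε) :
    (ε ≤ 2 - 2 / (Mx : ℝ) →
      |mutInfo p - mutInfo q| ≤
        ε / 2 * Real.log (((Mx : ℝ) * My - 1) * ((Mx : ℝ) - 1) * ((My : ℝ) - 1)) +
          3 * binEnt (ε / 2)) ∧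
    (2 - 2 / (Mx : ℝ) < ε → |mutInfo p - mutInfo q| ≤ Real.log (Mx : ℝ)) :=
  mutInfo_diff_le_improved_general hMx hMxy p q hp hq ε hV
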